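/- For n ≥ 2, the number of permutations of [n] avoiding both generalized patterns 1-23 and 3-21 equals 2(n-1). -/
import Mathlib


def contains123 {n : ℕ} (π : Equiv.Perm (Fin n)) : Prop :=
  ∃ i j : ℕ, ∃ (_ : i < j) (hj : j + 1 < n),
    π ⟨i, by omega⟩ < π ⟨j, by omega⟩ ∧ π ⟨j, by omega⟩ < π ⟨j + 1, hj⟩

def contains321 {n : ℕ} (π : Equiv.Perm (Fin n)) : Prop :=
  ∃ i j : ℕ, ∃ (_ : i < j) (hj : j + 1 < n),
    π ⟨j + 1, hj⟩ < π ⟨j, by omega⟩ ∧ π ⟨j, by omega⟩ < π ⟨i, by omega⟩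

namespace Stmt5Aux

open Equiv Fin Function

def avoid {n : ℕ} (π : Equiv.Perm (Fin n)) : Prop := ¬ contains123 π ∧ ¬ contains321 π

/-- Append value `v` at the last position of a permutation `σ`. -/
def ext {n : ℕ} (v : Fin (n + 1)) (σ : Equiv.Perm (Fin n)) : Equiv.Perm (Fin (n + 1)) :=
  finSuccEquivLast.trans ((Equiv.optionCongr σ).trans (finSuccEquiv' v).symm)

lemma ext_castSucc {n : ℕ} (v : Fin (n + 1)) (σ : Equiv.Perm (Fin n)) (i : Fin n) :
    ext v σ i.castSucc = v.succAbove (σ i) := by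
  simp [ext]

lemma ext_last {n : ℕ} (v : Fin (n + 1)) (σ : Equiv.Perm (Fin n)) :
    ext v σ (Fin.last n) = v := by
  simp [ext]

lemma ext_mk {n : ℕ} (v : Fin (n + 1)) (σ : Equiv.Perm (Fin n)) {k : ℕ}
    (hk : k < n) (h2 : k < n + 1) :
    ext v σ ⟨k, h2⟩ = v.succAbove (σ ⟨k, hk⟩) := by
  have h : (⟨k, h2⟩ : Fin (n + 1)) = Fin.castSucc ⟨k, hk⟩ := rfl
  rw [h, ext_castSucc]

lemma ext_mk_last {n : ℕ} (v : Fin (n + 1)) (σ : Equiv.Perm (Fin n)) (h2 : n < n + 1) :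
    ext v σ ⟨n, h2⟩ = v :=
  ext_last v σ

lemma avoid_of_avoid_ext {n : ℕ} {v : Fin (n + 1)} {σ : Equiv.Perm (Fin n)}
    (h : avoid (ext v σ)) : avoid σ := by
  obtain ⟨h1, h2⟩ := h
  constructor
  · rintro ⟨i, j, hij, hj, ha, hb⟩
    refine h1 ⟨i, j, hij, by omega, ?_, ?_⟩
    · rw [ext_mk v σ (by omega), ext_mk v σ (by omega)]
      exact Fin.succAbove_lt_succAbove_iff.mpr ha
    · rw [ext_mk v σ (by omega), ext_mk v σ hj]
      exact Fin.succAbove_lt_succAbove_iff.mpr hb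
  · rintro ⟨i, j, hij, hj, ha, hb⟩
    refine h2 ⟨i, j, hij, by omega, ?_, ?_⟩
    · rw [ext_mk v σ hj, ext_mk v σ (by omega)]
      exact Fin.succAbove_lt_succAbove_iff.mpr ha
    · rw [ext_mk v σ (by omega), ext_mk v σ (by omega)]
      exact Fin.succAbove_lt_succAbove_iff.mpr hb

lemma avoid_ext {m : ℕ} {v : Fin (m + 2)} {σ : Equiv.Perm (Fin (m + 1))} (hσ : avoid σ)
    (hc : (σ (Fin.last m) = 0 ∧ v ≠ 0) ∨ (σ (Fin.last m) = Fin.last m ∧ v ≠ Fin.last (m + 1))) :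
    avoid (ext v σ) := by
  have hlast : (⟨m, by omega⟩ : Fin (m + 1)) = Fin.last m := rfl
  constructor
  · rintro ⟨i, j, hij, hj, ha, hb⟩
    by_cases hjm : j + 1 < m + 1
    · refine hσ.1 ⟨i, j, hij, hjm, ?_, ?_⟩
      · rw [ext_mk v σ (by omega), ext_mk v σ (by omega)] at ha
        exact Fin.succAbove_lt_succAbove_iff.mp ha
      · rw [ext_mk v σ (by omega), ext_mk v σ hjm] at hb
        exact Fin.succAbove_lt_succAbove_iff.mp hb
    · have hjm' : j = m := by omega
      subst hjm'
      rw [ext_mk v σ (by omega), ext_mk_last] at hb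
      rw [ext_mk v σ (by omega), ext_mk v σ (by omega)] at ha
      rw [hlast] at ha hb
      rcases hc with ⟨h0, hv⟩ | ⟨hl, hv⟩
      · rw [h0, Fin.succAbove_ne_zero_zero hv] at ha
        exact absurd ha (Fin.not_lt_zero _)
      · rw [hl, Fin.succAbove_ne_last_last hv] at hb
        exact absurd hb (not_lt.mpr (Fin.le_last _))
  · rintro ⟨i, j, hij, hj, ha, hb⟩
    by_cases hjm : j + 1 < m + 1
    · refine hσ.2 ⟨i, j, hij, hjm, ?_, ?_⟩
      · rw [ext_mk v σ hjm, ext_mk v σ (show j < m + 1 by omega)] at ha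
        exact Fin.succAbove_lt_succAbove_iff.mp ha
      · rw [ext_mk v σ (show j < m + 1 by omega), ext_mk v σ (show i < m + 1 by omega)] at hb
        exact Fin.succAbove_lt_succAbove_iff.mp hb
    · have hjm' : j = m := by omega
      subst hjm'
      rw [ext_mk_last, ext_mk v σ (by omega)] at ha
      rw [ext_mk v σ (by omega), ext_mk v σ (by omega)] at hb
      rw [hlast] at ha hb
      rcases hc with ⟨h0, hv⟩ | ⟨hl, hv⟩
      · rw [h0, Fin.succAbove_ne_zero_zero hv] at ha
        exact absurd ha (Fin.not_lt_zero _)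
      · rw [hl, Fin.succAbove_ne_last_last hv] at hb
        exact absurd hb (not_lt.mpr (Fin.le_last _))

lemma cond_of_avoid_ext {m : ℕ} (hm : 1 ≤ m) {v : Fin (m + 2)} {σ : Equiv.Perm (Fin (m + 1))}
    (h : avoid (ext v σ)) :
    (σ (Fin.last m) = 0 ∧ v ≠ 0) ∨ (σ (Fin.last m) = Fin.last m ∧ v ≠ Fin.last (m + 1)) := by
  have hlast : (⟨m, by omega⟩ : Fin (m + 1)) = Fin.last m := rfl
  have hi1v : σ (σ.symm 0) = 0 := σ.apply_symm_apply 0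
  have hi2v : σ (σ.symm (Fin.last m)) = Fin.last m := σ.apply_symm_apply _
  have heta : ∀ (x : Fin (m + 1)) (hx : (x : ℕ) < m + 1), (⟨(x : ℕ), hx⟩ : Fin (m + 1)) = x :=
    fun x hx => rfl
  have hLor : σ (Fin.last m) = 0 ∨ σ (Fin.last m) = Fin.last m := by
    by_contra hcon
    push_neg at hcon
    obtain ⟨hL0, hLl⟩ := hcon
    have hi1m : ((σ.symm 0 : Fin (m + 1)) : ℕ) < m := by
      have h1 : σ.symm 0 ≠ Fin.last m := fun he => hL0 ((congrArg σ he).symm.trans hi1v)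
      have h2 : ((σ.symm 0 : Fin (m + 1)) : ℕ) ≠ m := fun hh => h1 (Fin.ext hh)
      have h3 := (σ.symm 0).isLt
      omega
    have hi2m : ((σ.symm (Fin.last m) : Fin (m + 1)) : ℕ) < m := by
      have h1 : σ.symm (Fin.last m) ≠ Fin.last m :=
        fun he => hLl ((congrArg σ he).symm.trans hi2v)
      have h2 : ((σ.symm (Fin.last m) : Fin (m + 1)) : ℕ) ≠ m := fun hh => h1 (Fin.ext hh)
      have h3 := (σ.symm (Fin.last m)).isLt
      omega
    have hVne : v.succAbove (σ (Fin.last m)) ≠ v := Fin.succAbove_ne v _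
    rcases lt_or_gt_of_ne hVne with hlt | hgt
    · refine h.1 ⟨(σ.symm 0 : Fin (m + 1)), m, hi1m, by omega, ?_, ?_⟩
      · rw [ext_mk v σ (show ((σ.symm 0 : Fin (m + 1)) : ℕ) < m + 1 by omega),
          ext_mk v σ (show m < m + 1 by omega), hlast, heta, hi1v]
        exact Fin.succAbove_lt_succAbove_iff.mpr (Fin.pos_of_ne_zero hL0)
      · rw [ext_mk v σ (show m < m + 1 by omega), ext_mk_last, hlast]
        exact hlt
    · refine h.2 ⟨(σ.symm (Fin.last m) : Fin (m + 1)), m, hi2m, by omega, ?_, ?_⟩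
      · rw [ext_mk v σ (show m < m + 1 by omega), ext_mk_last, hlast]
        exact hgt
      · rw [ext_mk v σ (show m < m + 1 by omega),
          ext_mk v σ (show ((σ.symm (Fin.last m) : Fin (m + 1)) : ℕ) < m + 1 by omega),
          hlast, heta, hi2v]
        exact Fin.succAbove_lt_succAbove_iff.mpr (Fin.lt_last_iff_ne_last.mpr hLl)
  rcases hLor with hL0 | hLl
  · refine Or.inl ⟨hL0, ?_⟩
    rintro rfl
    have hi2m : ((σ.symm (Fin.last m) : Fin (m + 1)) : ℕ) < m := by
      have h1 : σ.symm (Fin.last m) ≠ Fin.last m := by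
        intro he
        have hcontr : (0 : Fin (m + 1)) = Fin.last m := by
          rw [← hL0]; exact (congrArg σ he).symm.trans hi2v
        have hval := congrArg Fin.val hcontr
        simp only [Fin.val_zero, Fin.val_last] at hval
        omega
      have h2 : ((σ.symm (Fin.last m) : Fin (m + 1)) : ℕ) ≠ m := fun hh => h1 (Fin.ext hh)
      have h3 := (σ.symm (Fin.last m)).isLt
      omega
    refine h.2 ⟨(σ.symm (Fin.last m) : Fin (m + 1)), m, hi2m, by omega, ?_, ?_⟩
    · rw [ext_mk (0 : Fin (m + 2)) σ (show m < m + 1 by omega), ext_mk_last, hlast, hL0,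
        Fin.zero_succAbove]
      exact Fin.succ_pos _
    · rw [ext_mk (0 : Fin (m + 2)) σ (show m < m + 1 by omega),
        ext_mk (0 : Fin (m + 2)) σ
          (show ((σ.symm (Fin.last m) : Fin (m + 1)) : ℕ) < m + 1 by omega),
        hlast, heta, hi2v, hL0, Fin.zero_succAbove, Fin.zero_succAbove]
      refine Fin.succ_lt_succ_iff.mpr ?_
      simp only [Fin.lt_def, Fin.val_zero, Fin.val_last]
      omega
  · refine Or.inr ⟨hLl, ?_⟩
    rintro rfl
    have hi1m : ((σ.symm 0 : Fin (m + 1)) : ℕ) < m := by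
      have h1 : σ.symm 0 ≠ Fin.last m := by
        intro he
        have hcontr : Fin.last m = (0 : Fin (m + 1)) := by
          rw [← hLl]; exact (congrArg σ he).symm.trans hi1v
        have hval := congrArg Fin.val hcontr
        simp only [Fin.val_zero, Fin.val_last] at hval
        omega
      have h2 : ((σ.symm 0 : Fin (m + 1)) : ℕ) ≠ m := fun hh => h1 (Fin.ext hh)
      have h3 := (σ.symm 0).isLt
      omega
    refine h.1 ⟨(σ.symm 0 : Fin (m + 1)), m, hi1m, by omega, ?_, ?_⟩
    · rw [ext_mk (Fin.last (m + 1)) σ (show m < m + 1 by omega),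
        ext_mk (Fin.last (m + 1)) σ
          (show ((σ.symm 0 : Fin (m + 1)) : ℕ) < m + 1 by omega),
        hlast, heta, hi1v, hLl, Fin.succAbove_last]
      refine Fin.castSucc_lt_castSucc_iff.mpr ?_
      simp only [Fin.lt_def, Fin.val_zero, Fin.val_last]
      omega
    · rw [ext_mk (Fin.last (m + 1)) σ (show m < m + 1 by omega), ext_mk_last, hlast, hLl,
        Fin.succAbove_last]
      exact Fin.castSucc_lt_last _

lemma exists_ext {m : ℕ} (π : Equiv.Perm (Fin (m + 2))) :
    ∃ (v : Fin (m + 2)) (σ : Equiv.Perm (Fin (m + 1))), ext v σ = π := by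
  set v := π (Fin.last (m + 1)) with hv
  set oe : Option (Fin (m + 1)) ≃ Option (Fin (m + 1)) :=
    finSuccEquivLast.symm.trans (π.trans (finSuccEquiv' v)) with hoe
  have hnone : oe none = none := by
    simp [hoe, hv, finSuccEquiv'_at]
  refine ⟨v, Equiv.removeNone oe, ?_⟩
  ext i
  refine Fin.lastCases ?_ (fun j => ?_) i
  · rw [ext_last]
  · rw [ext_castSucc]
    have hsome : ∃ x, oe (some j) = some x := by
      rcases hx : oe (some j) with _ | x
      · exact absurd (oe.injective (hx.trans hnone.symm)) (by simp)
      · exact ⟨x, rfl⟩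
    have h1 : some (Equiv.removeNone oe j) = oe (some j) := Equiv.removeNone_some oe hsome
    have h2 : oe (some j) = finSuccEquiv' v (π j.castSucc) := by
      simp [hoe]
    rw [h2] at h1
    have h3 := congrArg (finSuccEquiv' v).symm h1
    rw [Equiv.symm_apply_apply] at h3
    rw [← h3, finSuccEquiv'_symm_some]

lemma ext_injective {m : ℕ} {v w : Fin (m + 2)} {σ τ : Equiv.Perm (Fin (m + 1))}
    (h : ext v σ = ext w τ) : v = w ∧ σ = τ := by
  have hv : v = w := by rw [← ext_last v σ, ← ext_last w τ, h]
  subst hv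
  refine ⟨rfl, ?_⟩
  apply Equiv.ext
  intro i
  have h2 : ext v σ i.castSucc = ext v τ i.castSucc := by rw [h]
  rw [ext_castSucc, ext_castSucc] at h2
  exact Fin.succAbove_right_injective h2

abbrev S0 (m : ℕ) := {σ : Equiv.Perm (Fin (m + 1)) // avoid σ ∧ σ (Fin.last m) = 0}

abbrev Sl (m : ℕ) := {σ : Equiv.Perm (Fin (m + 1)) // avoid σ ∧ σ (Fin.last m) = Fin.last m}

abbrev A (n : ℕ) := {π : Equiv.Perm (Fin n) // avoid π}

lemma zero_ne_last (m : ℕ) : (0 : Fin (m + 2)) ≠ Fin.last (m + 1) := by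
  intro h
  have := congrArg Fin.val h
  simp only [Fin.val_zero, Fin.val_last] at this
  omega

def G (m : ℕ) :
    (S0 m × {v : Fin (m + 2) // v ≠ 0}) ⊕ (Sl m × {v : Fin (m + 2) // v ≠ Fin.last (m + 1)}) →
      A (m + 2)
  | Sum.inl (σ, v) => ⟨ext v.1 σ.1, avoid_ext σ.2.1 (Or.inl ⟨σ.2.2, v.2⟩)⟩
  | Sum.inr (σ, v) => ⟨ext v.1 σ.1, avoid_ext σ.2.1 (Or.inr ⟨σ.2.2, v.2⟩)⟩

lemma G_bijective (m : ℕ) (hm : 1 ≤ m) : Function.Bijective (G m) := by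
  constructor
  · rintro (⟨⟨σ, hσ⟩, ⟨v, hv⟩⟩ | ⟨⟨σ, hσ⟩, ⟨v, hv⟩⟩) (⟨⟨τ, hτ⟩, ⟨w, hw⟩⟩ | ⟨⟨τ, hτ⟩, ⟨w, hw⟩⟩) hEq <;>
      obtain ⟨h1, h2⟩ := ext_injective (Subtype.ext_iff.mp hEq) <;> subst h1 <;> subst h2
    · rfl
    · exfalso
      have : (0 : Fin (m + 1)) = Fin.last m := by rw [← hσ.2, hτ.2]
      have hval := congrArg Fin.val this
      simp only [Fin.val_zero, Fin.val_last] at hval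
      omega
    · exfalso
      have : (0 : Fin (m + 1)) = Fin.last m := by rw [← hτ.2, hσ.2]
      have hval := congrArg Fin.val this
      simp only [Fin.val_zero, Fin.val_last] at hval
      omega
    · rfl
  · rintro ⟨π, hπ⟩
    obtain ⟨v, σ, rfl⟩ := exists_ext π
    rcases cond_of_avoid_ext hm hπ with ⟨h0, hv⟩ | ⟨hl, hv⟩
    · exact ⟨Sum.inl (⟨σ, avoid_of_avoid_ext hπ, h0⟩, ⟨v, hv⟩), rfl⟩
    · exact ⟨Sum.inr (⟨σ, avoid_of_avoid_ext hπ, hl⟩, ⟨v, hv⟩), rfl⟩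

def G0 (m : ℕ) : Sl m → S0 (m + 1) :=
  fun σ => ⟨ext 0 σ.1, ⟨avoid_ext σ.2.1 (Or.inr ⟨σ.2.2, zero_ne_last m⟩), ext_last 0 σ.1⟩⟩

def Gl (m : ℕ) : S0 m → Sl (m + 1) :=
  fun σ => ⟨ext (Fin.last (m + 1)) σ.1,
    ⟨avoid_ext σ.2.1 (Or.inl ⟨σ.2.2, (zero_ne_last m).symm⟩), ext_last _ σ.1⟩⟩

lemma G0_bijective (m : ℕ) (hm : 1 ≤ m) : Function.Bijective (G0 m) := by
  constructor
  · rintro ⟨σ, hσ⟩ ⟨τ, hτ⟩ hEq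
    obtain ⟨-, h2⟩ := ext_injective (Subtype.ext_iff.mp hEq)
    subst h2; rfl
  · rintro ⟨π, hπ, hπ0⟩
    obtain ⟨v, σ, rfl⟩ := exists_ext π
    have hv0 : v = 0 := by rw [← ext_last v σ]; exact hπ0
    subst hv0
    rcases cond_of_avoid_ext hm hπ with ⟨-, hv⟩ | ⟨hl, -⟩
    · exact absurd rfl hv
    · exact ⟨⟨σ, avoid_of_avoid_ext hπ, hl⟩, rfl⟩

lemma Gl_bijective (m : ℕ) (hm : 1 ≤ m) : Function.Bijective (Gl m) := by
  constructor
  · rintro ⟨σ, hσ⟩ ⟨τ, hτ⟩ hEq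
    obtain ⟨-, h2⟩ := ext_injective (Subtype.ext_iff.mp hEq)
    subst h2; rfl
  · rintro ⟨π, hπ, hπl⟩
    obtain ⟨v, σ, rfl⟩ := exists_ext π
    have hvl : v = Fin.last (m + 1) := by rw [← ext_last v σ]; exact hπl
    subst hvl
    rcases cond_of_avoid_ext hm hπ with ⟨h0, -⟩ | ⟨-, hv⟩
    · exact ⟨⟨σ, avoid_of_avoid_ext hπ, h0⟩, rfl⟩
    · exact absurd rfl hv

lemma card_ne (m : ℕ) (a : Fin (m + 2)) : Nat.card {v : Fin (m + 2) // v ≠ a} = m + 1 := by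
  rw [Nat.card_eq_fintype_card]
  have : Fintype.card {v : Fin (m + 2) // ¬ v = a} = m + 1 := by
    rw [Fintype.card_subtype_compl, Fintype.card_subtype_eq, Fintype.card_fin]
    omega
  exact this

lemma avoid_two (π : Equiv.Perm (Fin 2)) : avoid π := by
  constructor <;> rintro ⟨i, j, hij, hj, -⟩ <;> omega

lemma fin2_cases (x : Fin 2) : x = 0 ∨ x = Fin.last 1 := by
  revert x
  decide

lemma counts : ∀ k : ℕ, Nat.card (S0 (k + 1)) = 1 ∧ Nat.card (Sl (k + 1)) = 1 := by
  intro k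
  induction k with
  | zero =>
    constructor
    · rw [Nat.card_eq_one_iff_unique]
      constructor
      · constructor
        rintro ⟨σ, -, hσ⟩ ⟨τ, -, hτ⟩
        have hσ0 : σ 0 = Fin.last 1 := by
          rcases fin2_cases (σ 0) with h | h
          · exact absurd (σ.injective (h.trans hσ.symm)) (zero_ne_last 0)
          · exact h
        have hτ0 : τ 0 = Fin.last 1 := by
          rcases fin2_cases (τ 0) with h | h
          · exact absurd (τ.injective (h.trans hτ.symm)) (zero_ne_last 0)
          · exact h
        apply Subtype.ext
        apply Equiv.ext
        intro i
        rcases fin2_cases i with rfl | rfl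
        · rw [hσ0, hτ0]
        · rw [hσ, hτ]
      · refine ⟨⟨Equiv.swap 0 (Fin.last 1), avoid_two _, ?_⟩⟩
        exact Equiv.swap_apply_right 0 (Fin.last 1)
    · rw [Nat.card_eq_one_iff_unique]
      constructor
      · constructor
        rintro ⟨σ, -, hσ⟩ ⟨τ, -, hτ⟩
        have hσ0 : σ 0 = 0 := by
          rcases fin2_cases (σ 0) with h | h
          · exact h
          · exact absurd (σ.injective (h.trans hσ.symm)) (zero_ne_last 0)
        have hτ0 : τ 0 = 0 := by
          rcases fin2_cases (τ 0) with h | h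
          · exact h
          · exact absurd (τ.injective (h.trans hτ.symm)) (zero_ne_last 0)
        apply Subtype.ext
        apply Equiv.ext
        intro i
        rcases fin2_cases i with rfl | rfl
        · rw [hσ0, hτ0]
        · rw [hσ, hτ]
      · exact ⟨⟨Equiv.refl (Fin 2), avoid_two _, rfl⟩⟩
  | succ k ih =>
    refine ⟨?_, ?_⟩
    · exact (Nat.card_eq_of_bijective (G0 (k + 1))
        (G0_bijective (k + 1) (Nat.le_add_left 1 k))).symm.trans ih.2
    · exact (Nat.card_eq_of_bijective (Gl (k + 1))
        (Gl_bijective (k + 1) (Nat.le_add_left 1 k))).symm.trans ih.1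

lemma total (m : ℕ) (hm : 1 ≤ m) (h0 : Nat.card (S0 m) = 1) (hl : Nat.card (Sl m) = 1) :
    Nat.card (A (m + 2)) = 2 * (m + 1) := by
  rw [← Nat.card_eq_of_bijective _ (G_bijective m hm)]
  rw [Nat.card_sum, Nat.card_prod, Nat.card_prod, h0, hl, card_ne, card_ne]
  ring

end Stmt5Aux

theorem stmt5 (n : ℕ) (hn : 2 ≤ n) :
    Nat.card {π : Equiv.Perm (Fin n) // ¬ contains123 π ∧ ¬ contains321 π} = 2 * (n - 1) := by
  rcases Nat.lt_or_ge n 3 with h3 | h3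
  · have h2 : n = 2 := by omega
    subst h2
    have hall : ∀ π : Equiv.Perm (Fin 2), ¬ contains123 π ∧ ¬ contains321 π :=
      fun π => Stmt5Aux.avoid_two π
    rw [Nat.card_congr (Equiv.subtypeUnivEquiv hall), Nat.card_eq_fintype_card]
    simp [Fintype.card_perm]
  · obtain ⟨k, rfl⟩ : ∃ k, n = k + 3 := ⟨n - 3, by omega⟩
    obtain ⟨h0, hl⟩ := Stmt5Aux.counts k
    have htot := Stmt5Aux.total (k + 1) (by omega) h0 hl
    have harith : 2 * (k + 1 + 1) = 2 * (k + 3 - 1) := by omega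
    exact htot.trans harith
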